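/- Let f ∈ k_∞. Then there exists ε₀ > 0 such that Λ_ε(f) is an A-ideal for all 0 < ε < ε₀ if and only if f ∈ k. -/

import Mathlib

open scoped Classical
open Filter Topology

noncomputable section

namespace QuantumJ

variable (Fq : Type) [Field Fq] [Fintype Fq]

/-- `k_∞ = 𝔽_q((1/T))`, modeled as the field of Laurent series in `X = 1/T`. -/
abbrev Kinf := LaurentSeries Fq

/-- The element `T = X⁻¹` of `k_∞`. -/
def Tinf : Kinf Fq := HahnSeries.single (-1 : ℤ) (1 : Fq)

/-- The absolute value `|f| = q^{deg_T f} = q^{-ord_X f}`. -/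
def av (x : Kinf Fq) : ℝ :=
  if x = 0 then 0 else (Fintype.card Fq : ℝ) ^ (-(HahnSeries.order x))

/-- The inclusion of `A = 𝔽_q[T]` into `k_∞`. -/
def toK (a : Polynomial Fq) : Kinf Fq := Polynomial.aeval (Tinf Fq) a

/-- Membership in `k = 𝔽_q(T) ⊂ k_∞`. -/
def IsRational (x : Kinf Fq) : Prop :=
  ∃ a b : Polynomial Fq, b ≠ 0 ∧ toK Fq b * x = toK Fq a

/-- `‖x‖ = min_{a ∈ A} |x - a|`, the distance from `x` to the nearest polynomial in `T`. -/
def dA (x : Kinf Fq) : ℝ :=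
  sInf {r : ℝ | ∃ a : Polynomial Fq, r = av Fq (x - toK Fq a)}

/-- `Λ_ε(f) = {λ ∈ A : ‖λ f‖ < ε}`, viewed inside `A = 𝔽_q[T]`. -/
def Lam (f : Kinf Fq) (ε : ℝ) : Set (Polynomial Fq) :=
  {l | dA Fq (toK Fq l * f) < ε}

/-- The `ε`-zeta function `ζ_{f,ε}(n) = Σ_{0 ≠ λ ∈ Λ_ε(f) monic} λ^{-n}`. -/
def zetaE (f : Kinf Fq) (ε : ℝ) (n : ℕ) : Kinf Fq :=
  ∑' l : {l : Polynomial Fq // l ∈ Lam Fq f ε ∧ l.Monic}, ((toK Fq l.1)⁻¹) ^ n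

/-- The zeta function of `A`: `ζ_A(n) = Σ_{a monic} a^{-n}`. -/
def zetaA (n : ℕ) : Kinf Fq :=
  ∑' a : {a : Polynomial Fq // a.Monic}, ((toK Fq a.1)⁻¹) ^ n

/-- `Δ_ε(f) = -(T^{q²} - T) ζ_{f,ε}(q²-1) + (T^q - T)^q ζ_{f,ε}(q-1)^{q+1}`. -/
def DeltaE (f : Kinf Fq) (ε : ℝ) : Kinf Fq :=
  -((Tinf Fq) ^ ((Fintype.card Fq) ^ 2) - Tinf Fq) * zetaE Fq f ε ((Fintype.card Fq) ^ 2 - 1)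
    + ((Tinf Fq) ^ (Fintype.card Fq) - Tinf Fq) ^ (Fintype.card Fq)
        * (zetaE Fq f ε (Fintype.card Fq - 1)) ^ (Fintype.card Fq + 1)

/-- `g_ε(f) = -(T^q - T) ζ_{f,ε}(q-1)`. -/
def gE (f : Kinf Fq) (ε : ℝ) : Kinf Fq :=
  -((Tinf Fq) ^ (Fintype.card Fq) - Tinf Fq) * zetaE Fq f ε (Fintype.card Fq - 1)

/-- The `ε`-modular invariant `j_ε(f) = g_ε(f)^{q+1}/Δ_ε(f) ∈ k_∞ ∪ {∞}`,
with `j_ε(f) = ∞` when `Δ_ε(f) = 0`. -/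
def jE (f : Kinf Fq) (ε : ℝ) : OnePoint (Kinf Fq) :=
  if DeltaE Fq f ε = 0 then OnePoint.infty
  else ((gE Fq f ε ^ (Fintype.card Fq + 1) / DeltaE Fq f ε : Kinf Fq) : OnePoint (Kinf Fq))

/-- The quantum modular invariant `j^qt(f)`: the set of limit points in `k_∞ ∪ {∞}`
of `j_{ε_i}(f)` along sequences `ε_i → 0`, `ε_i > 0`. -/
def jqt (f : Kinf Fq) : Set (OnePoint (Kinf Fq)) :=
  {ξ | ∃ e : ℕ → ℝ, (∀ i, 0 < e i) ∧ Tendsto e atTop (𝓝 0) ∧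
    Tendsto (fun i => jE Fq f (e i)) atTop (𝓝 ξ)}

/-! ### Auxiliary development -/

section Aux

lemma one_lt_q : (1 : ℝ) < (Fintype.card Fq : ℝ) := by
  exact_mod_cast Fintype.one_lt_card

lemma q_pos : (0 : ℝ) < (Fintype.card Fq : ℝ) := lt_trans one_pos (one_lt_q Fq)

/-- Fractional part of a Laurent series: keep coefficients at positive indices. -/
def fr (x : Kinf Fq) : Kinf Fq :=
  ⟨fun n => if 1 ≤ n then x.coeff n else 0, by
    apply x.isPWO_support'.mono
    intro n hn
    simp only [Function.mem_support] at hn ⊢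
    intro h
    apply hn
    split_ifs with h1
    · exact h
    · rfl⟩

lemma fr_coeff (x : Kinf Fq) (n : ℤ) :
    (fr Fq x).coeff n = if 1 ≤ n then x.coeff n else 0 := rfl

lemma coeff_sum {ι : Type*} (s : Finset ι) (g : ι → Kinf Fq) (n : ℤ) :
    (∑ i ∈ s, g i).coeff n = ∑ i ∈ s, (g i).coeff n := by
  classical
  induction s using Finset.induction with
  | empty => simp
  | @insert _ _ h ih =>
      rw [Finset.sum_insert h, Finset.sum_insert h, HahnSeries.coeff_add, ih]

lemma Tinf_pow (i : ℕ) : (Tinf Fq) ^ i = HahnSeries.single (-(i : ℤ)) (1 : Fq) := by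
  induction i with
  | zero => simp [HahnSeries.single_zero_one]
  | succ n ih =>
      rw [pow_succ, ih, Tinf, HahnSeries.single_mul_single, mul_one]
      congr 1
      push_cast
      ring

lemma toK_eq (a : Polynomial Fq) :
    toK Fq a = ∑ i ∈ Finset.range (a.natDegree + 1),
      HahnSeries.single (-(i : ℤ)) (a.coeff i) := by
  rw [toK, Polynomial.aeval_eq_sum_range]
  refine Finset.sum_congr rfl fun i _ => ?_
  rw [Tinf_pow, Algebra.smul_def, HahnSeries.algebraMap_apply', PowerSeries.algebraMap_apply]
  simp [HahnSeries.ofPowerSeries_C, HahnSeries.C_apply, HahnSeries.single_mul_single]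

lemma toK_coeff_pos (a : Polynomial Fq) {n : ℤ} (hn : 0 < n) : (toK Fq a).coeff n = 0 := by
  rw [toK_eq, coeff_sum]
  refine Finset.sum_eq_zero fun i _ => ?_
  exact HahnSeries.coeff_single_of_ne (by omega)

lemma toK_coeff_neg (a : Polynomial Fq) (i : ℕ) : (toK Fq a).coeff (-(i : ℤ)) = a.coeff i := by
  rw [toK_eq, coeff_sum]
  by_cases hi : i ≤ a.natDegree
  · rw [Finset.sum_eq_single i]
    · exact HahnSeries.coeff_single_same _ _
    · intro j _ hj
      exact HahnSeries.coeff_single_of_ne (by omega)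
    · intro h
      exact absurd (Finset.mem_range.mpr (by omega)) h
  · rw [Polynomial.coeff_eq_zero_of_natDegree_lt (by omega)]
    refine Finset.sum_eq_zero fun j hj => ?_
    rw [Finset.mem_range] at hj
    exact HahnSeries.coeff_single_of_ne (by omega)

lemma toK_coeff_nonpos (a : Polynomial Fq) {n : ℤ} (hn : n ≤ 0) :
    (toK Fq a).coeff n = a.coeff (-n).toNat := by
  have : n = -(((-n).toNat : ℕ) : ℤ) := by omega
  rw [this, toK_coeff_neg]
  congr 1
  omega

lemma toK_zero : toK Fq 0 = 0 := by simp [toK]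

lemma toK_sub (a b : Polynomial Fq) : toK Fq (a - b) = toK Fq a - toK Fq b := by
  simp [toK, map_sub]

lemma toK_mul (a b : Polynomial Fq) : toK Fq (a * b) = toK Fq a * toK Fq b := by
  simp [toK, map_mul]

lemma order_eq_of_forall (y : Kinf Fq) (d : ℤ) (h1 : y.coeff d ≠ 0)
    (h2 : ∀ m, m < d → y.coeff m = 0) : y.order = d := by
  have hy : y ≠ 0 := fun h => h1 (by simp [h])
  refine le_antisymm (HahnSeries.order_le_of_coeff_ne_zero h1) ?_
  by_contra h
  push_neg at h
  exact HahnSeries.coeff_order_eq_zero.not.mpr hy (h2 _ h)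

lemma toK_ne_zero {a : Polynomial Fq} (ha : a ≠ 0) : toK Fq a ≠ 0 := by
  intro h
  have := toK_coeff_neg Fq a a.natDegree
  rw [h, HahnSeries.coeff_zero] at this
  exact Polynomial.leadingCoeff_ne_zero.mpr ha this.symm

lemma order_toK {a : Polynomial Fq} (ha : a ≠ 0) :
    (toK Fq a).order = -(a.natDegree : ℤ) := by
  apply order_eq_of_forall
  · rw [toK_coeff_neg]
    exact Polynomial.leadingCoeff_ne_zero.mpr ha
  · intro m hm
    have hm0 : m ≤ 0 := by omega
    rw [toK_coeff_nonpos Fq a hm0]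
    exact Polynomial.coeff_eq_zero_of_natDegree_lt (by omega)

lemma av_zero : av Fq 0 = 0 := if_pos rfl

lemma av_of_ne {x : Kinf Fq} (hx : x ≠ 0) :
    av Fq x = (Fintype.card Fq : ℝ) ^ (-x.order) := if_neg hx

lemma av_nonneg (x : Kinf Fq) : 0 ≤ av Fq x := by
  by_cases hx : x = 0
  · rw [hx, av_zero]
  · rw [av_of_ne Fq hx]
    positivity

/-- Integer-part existence: `x - fr x` is a polynomial. -/
lemma exists_ip (x : Kinf Fq) : ∃ a : Polynomial Fq, toK Fq a = x - fr Fq x := by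
  set y := x - fr Fq x with hy
  have hcoeff : ∀ n : ℤ, 0 < n → y.coeff n = 0 := by
    intro n hn
    rw [hy, HahnSeries.coeff_sub, fr_coeff, if_pos (by omega), sub_self]
  by_cases h0 : y = 0
  · exact ⟨0, by rw [toK_zero, h0]⟩
  · have hord : y.order ≤ 0 := by
      by_contra h
      push_neg at h
      exact HahnSeries.coeff_order_eq_zero.not.mpr h0 (hcoeff _ h)
    set N := (-y.order).toNat with hN
    refine ⟨∑ i ∈ Finset.range (N + 1), Polynomial.monomial i (y.coeff (-(i : ℤ))), ?_⟩
    ext n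
    rcases le_or_gt n 0 with hn | hn
    · rw [toK_coeff_nonpos Fq _ hn, Polynomial.finset_sum_coeff]
      by_cases hi : (-n).toNat ≤ N
      · rw [Finset.sum_eq_single (-n).toNat]
        · rw [Polynomial.coeff_monomial, if_pos rfl]
          congr 1
          omega
        · intro j _ hj
          rw [Polynomial.coeff_monomial, if_neg hj]
        · intro h
          exact absurd (Finset.mem_range.mpr (by omega)) h
      · have h1 : n < y.order := by omega
        rw [HahnSeries.coeff_eq_zero_of_lt_order h1]
        refine Finset.sum_eq_zero fun j hj => ?_
        rw [Finset.mem_range] at hj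
        rw [Polynomial.coeff_monomial, if_neg (by omega)]
    · rw [toK_coeff_pos Fq _ hn, hcoeff _ hn]

lemma ultra (v u : Kinf Fq) (hv : ∀ n, n ≤ 0 → v.coeff n = 0) (hu : u ≠ 0)
    (huo : u.order ≤ 0) : v + u ≠ 0 ∧ (v + u).order = u.order := by
  have hco : (v + u).coeff u.order ≠ 0 := by
    rw [HahnSeries.coeff_add, hv _ huo, zero_add]
    exact HahnSeries.coeff_order_eq_zero.not.mpr hu
  refine ⟨fun h => hco (by simp [h]), ?_⟩
  apply order_eq_of_forall
  · exact hco
  · intro m hm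
    rw [HahnSeries.coeff_add, hv _ (le_of_lt (lt_of_lt_of_le hm huo)),
      HahnSeries.coeff_eq_zero_of_lt_order hm, add_zero]

lemma fr_order_pos {x : Kinf Fq} (h : fr Fq x ≠ 0) : 1 ≤ (fr Fq x).order := by
  by_contra hlt
  push_neg at hlt
  have hco := HahnSeries.coeff_order_eq_zero.not.mpr h
  rw [fr_coeff, if_neg (by omega)] at hco
  exact hco rfl

lemma av_fr_lt_one (x : Kinf Fq) : av Fq (fr Fq x) < 1 := by
  by_cases h : fr Fq x = 0
  · rw [h, av_zero]; exact one_pos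
  · rw [av_of_ne Fq h]
    calc (Fintype.card Fq : ℝ) ^ (-(fr Fq x).order)
        < (Fintype.card Fq : ℝ) ^ (0 : ℤ) := by
          apply zpow_lt_zpow_right₀ (one_lt_q Fq)
          have := fr_order_pos Fq h
          omega
      _ = 1 := zpow_zero _

/-- The distance to `A` is the absolute value of the fractional part. -/
lemma dA_eq (x : Kinf Fq) : dA Fq x = av Fq (fr Fq x) := by
  obtain ⟨a₀, ha₀⟩ := exists_ip Fq x
  apply IsLeast.csInf_eq
  constructor
  · exact ⟨a₀, by rw [ha₀, sub_sub_cancel]⟩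
  · rintro r ⟨a, rfl⟩
    have hdecomp : x - toK Fq a = fr Fq x + toK Fq (a₀ - a) := by
      rw [toK_sub, ha₀]
      ring
    by_cases hc : a₀ - a = 0
    · rw [hdecomp, hc, toK_zero, add_zero]
    · rw [hdecomp]
      have hune := toK_ne_zero Fq hc
      have huo : (toK Fq (a₀ - a)).order ≤ 0 := by
        rw [order_toK Fq hc]; omega
      obtain ⟨hne, hord⟩ := ultra Fq (fr Fq x) (toK Fq (a₀ - a))
        (fun n hn => by rw [fr_coeff, if_neg (by omega)]) hune huo
      rw [av_of_ne Fq hne, hord]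
      refine le_of_lt (lt_of_lt_of_le (av_fr_lt_one Fq x) ?_)
      calc (1 : ℝ) = (Fintype.card Fq : ℝ) ^ (0 : ℤ) := (zpow_zero _).symm
        _ ≤ (Fintype.card Fq : ℝ) ^ (-(toK Fq (a₀ - a)).order) := by
            apply zpow_le_zpow_right₀ (le_of_lt (one_lt_q Fq))
            omega

lemma dA_eq_zero_of_eq_toK {x : Kinf Fq} {c : Polynomial Fq} (h : x = toK Fq c) :
    dA Fq x = 0 := by
  rw [dA_eq]
  have : fr Fq x = 0 := by
    ext n
    rw [fr_coeff, HahnSeries.coeff_zero]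
    split_ifs with h1
    · rw [h, toK_coeff_pos Fq c (by omega)]
    · rfl
  rw [this, av_zero]

/-- Multiplication by `T` shifts coefficients. -/
lemma Tinf_mul_coeff (x : Kinf Fq) (m : ℤ) :
    (Tinf Fq * x).coeff m = x.coeff (m + 1) := by
  have h := HahnSeries.coeff_single_mul_add (r := (1 : Fq)) (x := x) (a := m + 1) (b := (-1 : ℤ))
  simpa [Tinf] using h

/-- The ideal `{l | b ∣ l * a}`. -/
def divIdeal (a b : Polynomial Fq) : Ideal (Polynomial Fq) where
  carrier := {l | b ∣ l * a}
  add_mem' := fun hu hv => by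
    simp only [Set.mem_setOf_eq, add_mul] at *
    exact dvd_add hu hv
  zero_mem' := by simp
  smul_mem' := fun c l hl => by
    simp only [Set.mem_setOf_eq, smul_eq_mul, mul_assoc] at *
    exact hl.mul_left c

lemma mem_divIdeal {a b l : Polynomial Fq} : l ∈ divIdeal Fq a b ↔ b ∣ l * a := Iff.rfl

/-- Dirichlet / pigeonhole. -/
lemma dirichlet (f : Kinf Fq) (n : ℕ) :
    ∃ l : Polynomial Fq, l ≠ 0 ∧ ∀ m : ℤ, 1 ≤ m → m ≤ (n : ℤ) →
      (toK Fq l * f).coeff m = 0 := by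
  classical
  set P : (Fin (n + 1) → Fq) → Polynomial Fq :=
    fun v => ∑ i : Fin (n + 1), Polynomial.monomial (i : ℕ) (v i) with hP
  have hPcoeff : ∀ v (i : Fin (n + 1)), (P v).coeff (i : ℕ) = v i := by
    intro v i
    rw [hP, Polynomial.finset_sum_coeff, Finset.sum_eq_single i]
    · rw [Polynomial.coeff_monomial, if_pos rfl]
    · intro j _ hj
      rw [Polynomial.coeff_monomial, if_neg (fun h => hj (Fin.val_injective h))]
    · intro h
      exact absurd (Finset.mem_univ i) h
  set g : (Fin (n + 1) → Fq) → (Fin n → Fq) :=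
    fun v j => (toK Fq (P v) * f).coeff ((j : ℤ) + 1) with hg
  have hcard : Fintype.card (Fin n → Fq) < Fintype.card (Fin (n + 1) → Fq) := by
    rw [Fintype.card_fun, Fintype.card_fun, Fintype.card_fin, Fintype.card_fin]
    exact Nat.pow_lt_pow_right Fintype.one_lt_card (Nat.lt_succ_self n)
  obtain ⟨v1, v2, hv12, hgeq⟩ := Fintype.exists_ne_map_eq_of_card_lt g hcard
  refine ⟨P v1 - P v2, ?_, ?_⟩
  · intro h
    apply hv12
    funext i
    have := hPcoeff v1 i
    rw [show P v1 = P v2 from sub_eq_zero.mp h, hPcoeff v2 i] at this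
    exact this.symm
  · intro m hm1 hmn
    have hj : (m - 1).toNat < n := by omega
    have key := congrFun hgeq ⟨(m - 1).toNat, hj⟩
    rw [hg] at key
    simp only at key
    have hmval : (((m - 1).toNat : ℤ)) + 1 = m := by omega
    rw [toK_sub, sub_mul, HahnSeries.coeff_sub, ← hmval, key, sub_self]

end Aux

/-- `Λ_ε(f)` is an `A`-ideal for all sufficiently small `ε > 0` if and only
if `f ∈ k`. -/
theorem Lam_ideal_iff_rational (f : Kinf Fq) :
    (∃ ε₀ > (0 : ℝ), ∀ ε : ℝ, 0 < ε → ε < ε₀ →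
        ∃ I : Ideal (Polynomial Fq), Lam Fq f ε = ↑I)
      ↔ IsRational Fq f := by
  constructor
  · rintro ⟨ε₀, hε₀, H⟩
    by_contra hf
    obtain ⟨n₀, hn₀⟩ := exists_pow_lt_of_lt_one hε₀
      (inv_lt_one_of_one_lt₀ (one_lt_q Fq))
    set n := n₀ + 1 with hn
    have hqn : (Fintype.card Fq : ℝ) ^ (-(n : ℤ)) < ε₀ := by
      have hinv1 : ((Fintype.card Fq : ℝ))⁻¹ ≤ 1 :=
        le_of_lt (inv_lt_one_of_one_lt₀ (one_lt_q Fq))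
      have h1 : ((Fintype.card Fq : ℝ))⁻¹ ^ n ≤ ((Fintype.card Fq : ℝ))⁻¹ ^ n₀ :=
        pow_le_pow_of_le_one (by positivity) hinv1 (by omega)
      calc (Fintype.card Fq : ℝ) ^ (-(n : ℤ))
          = ((Fintype.card Fq : ℝ))⁻¹ ^ n := by
            rw [zpow_neg, zpow_natCast, ← inv_pow]
        _ ≤ ((Fintype.card Fq : ℝ))⁻¹ ^ n₀ := h1
        _ < ε₀ := hn₀
    obtain ⟨l₀, hl₀ne, hl₀⟩ := dirichlet Fq f n
    set x := toK Fq l₀ * f with hx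
    have hfrne : fr Fq x ≠ 0 := by
      intro h
      obtain ⟨a₀, ha₀⟩ := exists_ip Fq x
      exact hf ⟨a₀, l₀, hl₀ne, by rw [ha₀, h, sub_zero]⟩
    set d := (fr Fq x).order with hd
    have hd1 : 1 ≤ d := fr_order_pos Fq hfrne
    have hco : x.coeff d ≠ 0 := by
      have h2 := HahnSeries.coeff_order_eq_zero.not.mpr hfrne
      rwa [← hd, fr_coeff, if_pos hd1] at h2
    have hdn : (n : ℤ) + 1 ≤ d := by
      by_contra h
      push_neg at h
      exact hco (hl₀ d hd1 (by omega))
    set ε : ℝ := (Fintype.card Fq : ℝ) ^ (-(d - 1)) with hε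
    have hεpos : 0 < ε := zpow_pos (q_pos Fq) _
    have hεlt : ε < ε₀ := lt_of_le_of_lt
      (zpow_le_zpow_right₀ (le_of_lt (one_lt_q Fq)) (by omega)) hqn
    obtain ⟨I, hI⟩ := H ε hεpos hεlt
    have hmem : l₀ ∈ Lam Fq f ε := by
      show dA Fq (toK Fq l₀ * f) < ε
      rw [← hx, dA_eq, av_of_ne Fq hfrne, ← hd, hε]
      exact zpow_lt_zpow_right₀ (one_lt_q Fq) (by omega)
    rw [hI] at hmem
    have hmem2 : Polynomial.X * l₀ ∈ I := I.mul_mem_left _ hmem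
    have hmem3 : Polynomial.X * l₀ ∈ Lam Fq f ε := by
      rw [hI]
      exact hmem2
    have hlt : dA Fq (toK Fq (Polynomial.X * l₀) * f) < ε := hmem3
    have htoKX : toK Fq Polynomial.X = Tinf Fq := Polynomial.aeval_X _
    have heq : toK Fq (Polynomial.X * l₀) * f = Tinf Fq * x := by
      rw [toK_mul, htoKX, mul_assoc, ← hx]
    rw [heq] at hlt
    have hco2 : (fr Fq (Tinf Fq * x)).coeff (d - 1) ≠ 0 := by
      rw [fr_coeff, if_pos (by omega), Tinf_mul_coeff,
        show d - 1 + 1 = d by ring]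
      exact hco
    have hfryne : fr Fq (Tinf Fq * x) ≠ 0 := fun h => hco2 (by simp [h])
    have hordy : (fr Fq (Tinf Fq * x)).order = d - 1 := by
      apply order_eq_of_forall Fq _ _ hco2
      intro m hm
      rw [fr_coeff]
      split_ifs with h1
      · rw [Tinf_mul_coeff]
        have h3 : (fr Fq x).coeff (m + 1) = 0 :=
          HahnSeries.coeff_eq_zero_of_lt_order (by omega)
        rwa [fr_coeff, if_pos (by omega)] at h3
      · rfl
    rw [dA_eq, av_of_ne Fq hfryne, hordy, hε] at hlt
    exact lt_irrefl _ hlt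
  · rintro ⟨a, b, hb, hab⟩
    refine ⟨(Fintype.card Fq : ℝ) ^ (-(b.natDegree : ℤ)), zpow_pos (q_pos Fq) _,
      fun ε hε hεlt => ⟨divIdeal Fq a b, ?_⟩⟩
    ext l
    simp only [Lam, Set.mem_setOf_eq, SetLike.mem_coe, mem_divIdeal]
    constructor
    · intro hlt
      by_contra hdvd
      have hb' : (b * Polynomial.C b.leadingCoeff⁻¹).Monic :=
        Polynomial.monic_mul_leadingCoeff_inv hb
      set b' := b * Polynomial.C b.leadingCoeff⁻¹ with hbdef
      set r := (l * a) %ₘ b' with hr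
      set qq := Polynomial.C b.leadingCoeff⁻¹ * ((l * a) /ₘ b') with hqq
      have hdiv : l * a = b * qq + r := by
        have h1 := Polynomial.modByMonic_add_div (l * a) b'
        conv_lhs => rw [← h1]
        rw [hqq, hr, hbdef]
        ring
      have hrne : r ≠ 0 := by
        intro h0
        apply hdvd
        have hb'dvd : b' ∣ l * a := (Polynomial.modByMonic_eq_zero_iff_dvd hb').mp h0
        obtain ⟨t, ht⟩ := hb'dvd
        exact ⟨Polynomial.C b.leadingCoeff⁻¹ * t, by rw [ht, hbdef]; ring⟩
      have hdeg : r.natDegree < b.natDegree := by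
        have h1 : r.degree < b'.degree := Polynomial.degree_modByMonic_lt _ hb'
        have h2 : b'.degree = b.degree := Polynomial.degree_mul_leadingCoeff_inv b hb
        exact Polynomial.natDegree_lt_natDegree hrne (h2 ▸ h1)
      set x := toK Fq l * f with hx
      have hbx : toK Fq b * (x - toK Fq qq) = toK Fq r := by
        rw [mul_sub, hx, ← mul_assoc, mul_comm (toK Fq b) (toK Fq l), mul_assoc, hab,
          ← toK_mul, ← toK_mul, ← toK_sub]
        congr 1
        rw [hdiv]
        ring
      have hwne : x - toK Fq qq ≠ 0 := by
        intro h0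
        apply toK_ne_zero Fq hrne
        rw [← hbx, h0, mul_zero]
      have hworder : (x - toK Fq qq).order = (b.natDegree : ℤ) - r.natDegree := by
        have h4 := HahnSeries.order_mul (toK_ne_zero Fq hb) hwne
        rw [hbx, order_toK Fq hrne, order_toK Fq hb] at h4
        omega
      have hfrx : fr Fq x = x - toK Fq qq := by
        ext m
        rw [fr_coeff]
        split_ifs with h1
        · rw [HahnSeries.coeff_sub, toK_coeff_pos Fq qq (by omega), sub_zero]
        · exact (HahnSeries.coeff_eq_zero_of_lt_order (by rw [hworder]; omega)).symm
      have hge : (Fintype.card Fq : ℝ) ^ (-(b.natDegree : ℤ)) ≤ dA Fq x := by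
        rw [dA_eq, hfrx, av_of_ne Fq hwne, hworder]
        apply zpow_le_zpow_right₀ (le_of_lt (one_lt_q Fq))
        omega
      linarith
    · rintro ⟨c, hc⟩
      have heq : toK Fq l * f = toK Fq c := by
        have hbne := toK_ne_zero Fq hb
        apply mul_left_cancel₀ hbne
        rw [← mul_assoc, mul_comm (toK Fq b) (toK Fq l), mul_assoc, hab, ← toK_mul, hc,
          toK_mul]
      rw [dA_eq_zero_of_eq_toK Fq heq]
      exact hε

end QuantumJ
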